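/- Let m, n be reals with 0 < m < n and n² ≠ 3m², and let Γ = {(2mi + mj, nj) : i, j ∈ ℤ}. Then the point group P(Γ), i.e. the set of linear isometries f of ℝ² with f(Γ) = Γ, is exactly {id, −id, α, −α}, where α(x,y) = (−x,y); in particular P(Γ) is isomorphic to the Klein four group (the dihedral group D₂ of order 4). -/

import Mathlib

/-!
A linear isometry `f` of the plane is determined by the images of `v = (m, n)` and
`w = (-m, n)`. If `f` preserves `Γ`, these images are `(m a, n b)` and `(m c, n d)` with integers
`a, b, c, d`, and preserving the Gram matrix of `v, w` gives three equations (`RhombicGram`).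
Since `m < n`, `b, d ∈ {-1, 0, 1}`. The case `b = 0` forces `a ∣ 2`, hence `a = ±2` and
`n² = 3m²` (the hexagonal lattice). When `b, d = ±1` we get `a, c = ±1`, and `m < n` rules out
everything but `c = -a`, `d = b` (`m = n` would be the square lattice). So `f = diag(a, b)`, and
these four sign maps form a copy of `ℤˣ × ℤˣ`, a Klein four-group.
-/

/-- The Euclidean plane. -/
abbrev Plane := EuclideanSpace ℝ (Fin 2)

/-- The rhombic lattice `Γ = {(2mi + mj, nj) : i, j ∈ ℤ}` in the Euclidean plane. -/
def rhombicLattice (m n : ℝ) : Set Plane :=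
  {p | ∃ i j : ℤ, p 0 = 2 * m * (i : ℝ) + m * (j : ℝ) ∧ p 1 = n * (j : ℝ)}

/-- The point group of `Γ`: the set of linear isometries (as self-isometries of the
plane) mapping `Γ` onto itself. -/
def pointGroupSet (Γ : Set Plane) : Set (Plane ≃ᵢ Plane) :=
  {f | (∀ (c : ℝ) (x y : Plane), f (c • x + y) = c • f x + f y) ∧ f '' Γ = Γ}

open Set
open scoped RealInnerProductSpace

namespace Plane

theorem ext_iff_fin_two {p q : Plane} : p = q ↔ p 0 = q 0 ∧ p 1 = q 1 := by
  refine ⟨fun h => h ▸ ⟨rfl, rfl⟩, fun ⟨h0, h1⟩ => ?_⟩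
  ext i; fin_cases i <;> assumption

theorem inner_eq (x y : Plane) : ⟪x, y⟫ = x 0 * y 0 + x 1 * y 1 := by
  simp [PiLp.inner_apply, Fin.sum_univ_two, mul_comm]

end Plane

theorem Int.cast_units_sq (u : ℤˣ) : ((u : ℤ) : ℝ) ^ 2 = 1 := by
  norm_cast; simp

theorem Int.eq_zero_or_isUnit_of_sq_lt_two {b : ℤ} (h : b ^ 2 < 2) : b = 0 ∨ IsUnit b := by
  have : -1 ≤ b ∧ b ≤ 1 := by constructor <;> nlinarith
  rw [Int.isUnit_iff]
  omega

noncomputable def signFlip : ℤˣ × ℤˣ →* (Plane ≃ᵢ Plane) where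
  toFun s :=
    { toFun p := !₂[s.1 * p 0, s.2 * p 1]
      invFun p := !₂[s.1 * p 0, s.2 * p 1]
      left_inv p := by simp [Plane.ext_iff_fin_two, ← mul_assoc, ← sq, Int.cast_units_sq]
      right_inv p := by simp [Plane.ext_iff_fin_two, ← mul_assoc, ← sq, Int.cast_units_sq]
      isometry_toFun := Isometry.of_dist_eq fun p q => by
        simp [EuclideanSpace.dist_eq, Fin.sum_univ_two, Real.dist_eq, sq_abs, ← mul_sub,
          mul_pow, Int.cast_units_sq] }
  map_one' := by ext p i; fin_cases i <;> simp
  map_mul' s t := by ext p i; fin_cases i <;> simp [mul_assoc]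

theorem signFlip_apply (s : ℤˣ × ℤˣ) (p : Plane) :
    signFlip s p = !₂[s.1 * p 0, s.2 * p 1] :=
  rfl

theorem signFlip_injective : Function.Injective signFlip := by
  intro s t h
  have h1 := congrArg (fun f : Plane ≃ᵢ Plane => f !₂[1, 1]) h
  simp [signFlip_apply] at h1
  ext <;> simp [h1]

theorem signFlip_involutive (s : ℤˣ × ℤˣ) : Function.Involutive (signFlip s) := fun p => by
  rw [← IsometryEquiv.mul_apply, ← map_mul, ← sq,
    show s ^ 2 = 1 from Prod.ext (Int.units_sq _) (Int.units_sq _), map_one]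
  rfl

section
variable {m n : ℝ}

theorem exists_int_coords_of_mem_rhombicLattice {p : Plane} (hp : p ∈ rhombicLattice m n) :
    ∃ a b : ℤ, p 0 = m * a ∧ p 1 = n * b := by
  obtain ⟨i, j, h0, h1⟩ := hp
  exact ⟨2 * i + j, j, by rw [h0]; push_cast; ring, h1⟩

theorem mapsTo_signFlip (s : ℤˣ × ℤˣ) :
    MapsTo (signFlip s) (rhombicLattice m n) (rhombicLattice m n) := by
  rintro p ⟨i, j, h0, h1⟩
  obtain ⟨k, hk⟩ : ∃ k : ℤ, (s.1 : ℤ) = s.2 + 2 * k :=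
    ⟨(s.1 - s.2) / 2, by
      rcases Int.units_eq_one_or s.1 with h | h <;> rcases Int.units_eq_one_or s.2 with h' | h' <;>
        simp [h, h']⟩
  have hk' : ((s.1 : ℤ) : ℝ) = s.2 + 2 * k := by exact_mod_cast hk
  refine ⟨s.1 * i + k * j, s.2 * j, ?_, ?_⟩
  · simp [signFlip_apply, h0, hk']; ring
  · simp [signFlip_apply, h1]; ring

theorem signFlip_mem_pointGroupSet (s : ℤˣ × ℤˣ) :
    signFlip s ∈ pointGroupSet (rhombicLattice m n) := by
  refine ⟨fun c x y => ?_, (mapsTo_signFlip s).image_subset.antisymm fun p hp => ?_⟩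
  · simp only [signFlip_apply, Plane.ext_iff_fin_two]
    constructor <;> simp <;> ring
  · exact ⟨signFlip s p, mapsTo_signFlip s hp, signFlip_involutive s p⟩

theorem LinearMap.apply_eq_of_apply_rhombicBasis (hm : m ≠ 0) (hn : n ≠ 0)
    (L : Plane →ₗ[ℝ] Plane) {a b : ℝ} (hv : L !₂[m, n] = !₂[m * a, n * b])
    (hw : L !₂[-m, n] = !₂[-(m * a), n * b]) (p : Plane) :
    L p = !₂[a * p 0, b * p 1] := by
  have hp :
      p = ((p 0 / m + p 1 / n) / 2) • !₂[m, n] + ((p 1 / n - p 0 / m) / 2) • !₂[-m, n] := by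
    rw [Plane.ext_iff_fin_two]; constructor <;> simp <;> field_simp <;> ring
  conv_lhs => rw [hp, map_add, map_smul, map_smul, hv, hw]
  rw [Plane.ext_iff_fin_two]; constructor <;> simp <;> field_simp <;> ring

structure RhombicGram (m n : ℝ) (a b c d : ℤ) : Prop where
  norm_sq_left : m ^ 2 * a ^ 2 + n ^ 2 * b ^ 2 = m ^ 2 + n ^ 2
  norm_sq_right : m ^ 2 * c ^ 2 + n ^ 2 * d ^ 2 = m ^ 2 + n ^ 2
  inner : m ^ 2 * (a * c) + n ^ 2 * (b * d) = n ^ 2 - m ^ 2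

namespace RhombicGram

variable {a b c d : ℤ} (h : RhombicGram m n a b c d) (hm : 0 < m) (hmn : m < n)
include h hm hmn

omit hm hmn in
theorem symm : RhombicGram m n c d a b :=
  ⟨h.norm_sq_right, h.norm_sq_left, by linear_combination h.inner⟩

theorem eq_zero_or_isUnit : b = 0 ∨ IsUnit b := by
  refine Int.eq_zero_or_isUnit_of_sq_lt_two (Int.cast_lt (R := ℝ).1 ?_)
  push_cast
  nlinarith [h.norm_sq_left, sq_nonneg (a : ℝ), mul_self_pos.2 hm.ne']

theorem ne_zero (hsq : n ^ 2 ≠ 3 * m ^ 2) : b ≠ 0 := by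
  rintro rfl
  have hn2 : n ^ 2 = m ^ 2 * (a ^ 2 - 1) := by linear_combination -h.norm_sq_left
  have hac : a * c = a ^ 2 - 2 := by
    have : (a : ℝ) * c = a ^ 2 - 2 :=
      mul_left_cancel₀ (pow_pos hm 2).ne' (by linear_combination h.inner + hn2)
    exact_mod_cast this
  have hdvd : a ∣ 2 := ⟨a - c, by linear_combination hac⟩
  have : a ≤ 2 := Int.le_of_dvd two_pos hdvd
  have : -2 ≤ a := by linarith [Int.le_of_dvd two_pos (neg_dvd.2 hdvd)]
  interval_cases a <;> norm_num at hn2 <;> exact hsq (by linarith)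

omit hmn in
theorem isUnit_left_of_isUnit (hb : IsUnit b) : IsUnit a := by
  have hb2 : (b : ℝ) * b = 1 := by exact_mod_cast Int.isUnit_mul_self hb
  have : (a : ℝ) * a = 1 :=
    mul_left_cancel₀ (pow_pos hm 2).ne' (by linear_combination h.norm_sq_left - n ^ 2 * hb2)
  exact .of_mul_eq_one a (by exact_mod_cast this)

theorem eq_of_isUnit (hb : IsUnit b) (hd : IsUnit d) : c = -a ∧ d = b := by
  have hinner : m ^ 2 * ((a * c : ℤ) : ℝ) + n ^ 2 * ((b * d : ℤ) : ℝ) = n ^ 2 - m ^ 2 := by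
    push_cast; exact h.inner
  have hac_le : ((a * c : ℤ) : ℝ) ≤ 1 := by
    rcases Int.isUnit_iff.1 ((h.isUnit_left_of_isUnit hm hb).mul
      (h.symm.isUnit_left_of_isUnit hm hd)) with hac | hac <;> rw [hac] <;> norm_num
  have hbd : b * d = 1 := by
    refine (Int.isUnit_iff.1 (hb.mul hd)).resolve_right fun hbd => ?_
    rw [hbd, Int.cast_neg, Int.cast_one] at hinner
    nlinarith [mul_lt_mul_of_pos_right hmn (hm.trans hmn), mul_lt_mul_of_pos_left hmn hm]
  have hac : a * -c = 1 := by
    rw [hbd] at hinner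
    have : ((a * c : ℤ) : ℝ) = -1 :=
      mul_left_cancel₀ (pow_pos hm 2).ne' (by linear_combination hinner)
    rw [mul_neg, neg_eq_iff_eq_neg]; exact_mod_cast this
  exact ⟨by rw [Int.eq_of_mul_eq_one hac, neg_neg], (Int.eq_of_mul_eq_one hbd).symm⟩

theorem isUnit_and_eq (hsq : n ^ 2 ≠ 3 * m ^ 2) : IsUnit a ∧ IsUnit b ∧ c = -a ∧ d = b := by
  have hb := (h.eq_zero_or_isUnit hm hmn).resolve_left (h.ne_zero hm hmn hsq)
  have hd := (h.symm.eq_zero_or_isUnit hm hmn).resolve_left (h.symm.ne_zero hm hmn hsq)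
  exact ⟨h.isUnit_left_of_isUnit hm hb, hb, h.eq_of_isUnit hm hmn hb hd⟩

end RhombicGram

variable (hm : 0 < m) (hmn : m < n) (hsq : n ^ 2 ≠ 3 * m ^ 2)
include hm hmn hsq

theorem exists_signFlip_eq_of_mapsTo (L : Plane ≃ₗᵢ[ℝ] Plane)
    (hL : MapsTo L (rhombicLattice m n) (rhombicLattice m n)) : ∃ s, ⇑(signFlip s) = L := by
  have hv : !₂[m, n] ∈ rhombicLattice m n := ⟨0, 1, by simp, by simp⟩
  have hw : !₂[-m, n] ∈ rhombicLattice m n := ⟨-1, 1, by simp; ring, by simp⟩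
  obtain ⟨a, b, ha, hb⟩ := exists_int_coords_of_mem_rhombicLattice (hL hv)
  obtain ⟨c, d, hc, hd⟩ := exists_int_coords_of_mem_rhombicLattice (hL hw)
  have gram (x y : Plane) : L x 0 * L y 0 + L x 1 * L y 1 = x 0 * y 0 + x 1 * y 1 := by
    simpa only [Plane.inner_eq] using L.inner_map_map x y
  have hvv := gram !₂[m, n] !₂[m, n]
  have hww := gram !₂[-m, n] !₂[-m, n]
  have hvw := gram !₂[m, n] !₂[-m, n]
  simp [ha, hb, hc, hd] at hvv hww hvw
  have hgram : RhombicGram m n a b c d :=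
    ⟨by linear_combination hvv, by linear_combination hww, by linear_combination hvw⟩
  obtain ⟨hau, hbu, rfl, rfl⟩ := hgram.isUnit_and_eq hm hmn hsq
  refine ⟨(hau.unit, hbu.unit), funext fun p =>
    (LinearMap.apply_eq_of_apply_rhombicBasis hm.ne' (hm.trans hmn).ne'
      (L : Plane →ₗ[ℝ] Plane) ?_ ?_ p).symm⟩
  · simp [Plane.ext_iff_fin_two, ha, hb]
  · simp [Plane.ext_iff_fin_two, hc, hd]

theorem pointGroupSet_rhombicLattice : pointGroupSet (rhombicLattice m n) = range signFlip := by
  refine Subset.antisymm ?_ (range_subset_iff.2 signFlip_mem_pointGroupSet)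
  rintro f ⟨hlin, himg⟩
  have h0 : f 0 = 0 := by simpa using hlin (-1) 0 0
  obtain ⟨s, hs⟩ := exists_signFlip_eq_of_mapsTo hm hmn hsq
    (f.toRealLinearIsometryEquivOfMapZero h0) fun p hp => himg.subset (mem_image_of_mem f hp)
  exact ⟨s, IsometryEquiv.ext (congrFun hs)⟩

end

theorem range_signFlip :
    range signFlip =
      {f : Plane ≃ᵢ Plane |
        (∀ p, f p = p) ∨ (∀ p, f p = -p) ∨
        (∀ p, (f p) 0 = -(p 0) ∧ (f p) 1 = p 1) ∨
        (∀ p, (f p) 0 = p 0 ∧ (f p) 1 = -(p 1))} := by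
  ext f
  constructor
  · rintro ⟨⟨a, b⟩, rfl⟩
    rcases Int.units_eq_one_or a with rfl | rfl <;> rcases Int.units_eq_one_or b with rfl | rfl <;>
      simp [signFlip_apply, Plane.ext_iff_fin_two]
  · rintro (h | h | h | h) <;> [use (1, 1); use (-1, -1); use (-1, 1); use (1, -1)] <;>
      exact IsometryEquiv.ext fun p => by simp [signFlip_apply, Plane.ext_iff_fin_two, h]

instance : IsKleinFour (ℤˣ × ℤˣ) where
  card_four := by simp [Nat.card_eq_fintype_card]
  exponent_two := by
    have : Nontrivial (ℤˣ × ℤˣ) := nontrivial_of_ne 1 (-1) (by decide)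
    exact (Monoid.exponent_eq_prime_iff Nat.prime_two).2 fun g hg =>
      orderOf_eq_prime (Prod.ext (Int.units_sq _) (Int.units_sq _)) hg

/-- For `0 < m < n` with `n² ≠ 3m²`, the point group of the rhombic
lattice `Γ = {(2mi + mj, nj) : i, j ∈ ℤ}` consists exactly of `id`, `−id`, the
reflection `α(x,y) = (−x,y)`, and `−α : (x,y) ↦ (x,−y)`; in particular, any subgroup
of the isometry group of the plane with this carrier is isomorphic to the Klein four
group (the dihedral group `D₂` of order 4). -/
theorem stmt_1 (m n : ℝ) (hm : 0 < m) (hmn : m < n) (hsq : n ^ 2 ≠ 3 * m ^ 2) :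
    pointGroupSet (rhombicLattice m n) =
      {f : Plane ≃ᵢ Plane |
        (∀ p, f p = p) ∨ (∀ p, f p = -p) ∨
        (∀ p, (f p) 0 = -(p 0) ∧ (f p) 1 = p 1) ∨
        (∀ p, (f p) 0 = p 0 ∧ (f p) 1 = -(p 1))} ∧
    ∀ P : Subgroup (Plane ≃ᵢ Plane),
      (P : Set (Plane ≃ᵢ Plane)) = pointGroupSet (rhombicLattice m n) →
        Nonempty (P ≃* DihedralGroup 2) := by
  have hΓ := pointGroupSet_rhombicLattice hm hmn hsq
  refine ⟨hΓ.trans range_signFlip, fun P hP => ?_⟩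
  have hP_range : P = signFlip.range :=
    SetLike.coe_injective (hP.trans (hΓ.trans signFlip.coe_range.symm))
  exact ⟨(MulEquiv.subgroupCongr hP_range).trans
    ((MonoidHom.ofInjective signFlip_injective).symm.trans IsKleinFour.nonempty_mulEquiv.some)⟩
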